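/- arXiv:2505.01971 — 2 statements merged into one kernel-verified Lean document; each statement's English description precedes it below -/
import Mathlib

section
/- Let b = (b_1, …, b_n) and c = (c_1, …, c_n) be real vectors with b_i ≥ c_i for all i, and let Y and Z be random vectors having the permutation distributions on b and on c, respectively. Then for any two disjoint proper subsets I, L of {1,…,n} and any x_I ∈ ℝ^{|I|} such that both conditioning events have positive probability, [Z_L | Z_I ≥ x_I] ≤_st [Y_L | Y_I ≥ x_I]. -/
open scoped Classical
open Finset

noncomputable section

/-- Probability of the event `A` on a finite sample space with weights `w`. -/
def Pr {Ω : Type*} [Fintype Ω] (w : Ω → ℝ) (A : Ω → Prop) : ℝ :=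
  ∑ ω : Ω, if A ω then w ω else 0

/-- Expectation of `f` on a finite sample space with weights `w`. -/
def Expec {Ω : Type*} [Fintype Ω] (w : Ω → ℝ) (f : Ω → ℝ) : ℝ :=
  ∑ ω : Ω, w ω * f ω

/-- Conditional expectation of `f` given the event `A` under weights `w`. -/
def CExp {Ω : Type*} [Fintype Ω] (w : Ω → ℝ) (A : Ω → Prop) (f : Ω → ℝ) : ℝ :=
  (∑ ω : Ω, if A ω then w ω * f ω else 0) / Pr w A

/-- `[X_I | A] ≤_st [X_I | B]` : the conditional distribution of the subvector `X_I`
given the event `A` is dominated, in the usual stochastic order, by the conditional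
distribution of `X_I` given `B`; i.e. conditional expectations of every bounded
coordinatewise increasing function compare. -/
def CondSubvecStochLE {Ω : Type*} [Fintype Ω] {n : ℕ} (w : Ω → ℝ)
    (X : Ω → Fin n → ℝ) (I : Finset (Fin n)) (A B : Ω → Prop) : Prop :=
  ∀ φ : ({i : Fin n // i ∈ I} → ℝ) → ℝ, Monotone φ → (∃ C, ∀ v, |φ v| ≤ C) →
    CExp w A (fun ω => φ fun i => X ω i.1) ≤ CExp w B (fun ω => φ fun i => X ω i.1)

/-- Negative regression dependence: `[X_I | X_J = x_J] ≥_st [X_I | X_J = x_J*]`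
whenever `x_J ≤ x_J*` componentwise and both conditioning events have
positive probability. -/
def IsNRD {Ω : Type*} [Fintype Ω] {n : ℕ} (w : Ω → ℝ) (X : Ω → Fin n → ℝ) : Prop :=
  ∀ I J : Finset (Fin n), Disjoint I J → ∀ x y : Fin n → ℝ, (∀ j ∈ J, x j ≤ y j) →
    0 < Pr w (fun ω => ∀ j ∈ J, X ω j = x j) →
    0 < Pr w (fun ω => ∀ j ∈ J, X ω j = y j) →
    CondSubvecStochLE w X I (fun ω => ∀ j ∈ J, X ω j = y j)
      (fun ω => ∀ j ∈ J, X ω j = x j)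

/-- Negative left-tail dependence: `[X_I | X_J ≤ x_J] ≥_st [X_I | X_J ≤ x_J*]`
whenever `x_J ≤ x_J*` componentwise and both conditioning events have
positive probability. -/
def IsNLTD {Ω : Type*} [Fintype Ω] {n : ℕ} (w : Ω → ℝ) (X : Ω → Fin n → ℝ) : Prop :=
  ∀ I J : Finset (Fin n), Disjoint I J → ∀ x y : Fin n → ℝ, (∀ j ∈ J, x j ≤ y j) →
    0 < Pr w (fun ω => ∀ j ∈ J, X ω j ≤ x j) →
    0 < Pr w (fun ω => ∀ j ∈ J, X ω j ≤ y j) →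
    CondSubvecStochLE w X I (fun ω => ∀ j ∈ J, X ω j ≤ y j)
      (fun ω => ∀ j ∈ J, X ω j ≤ x j)

/-- Negative right-tail dependence: `[X_I | X_J > x_J] ≥_st [X_I | X_J > x_J*]`
whenever `x_J ≤ x_J*` componentwise and both conditioning events have
positive probability. -/
def IsNRTD {Ω : Type*} [Fintype Ω] {n : ℕ} (w : Ω → ℝ) (X : Ω → Fin n → ℝ) : Prop :=
  ∀ I J : Finset (Fin n), Disjoint I J → ∀ x y : Fin n → ℝ, (∀ j ∈ J, x j ≤ y j) →
    0 < Pr w (fun ω => ∀ j ∈ J, x j < X ω j) →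
    0 < Pr w (fun ω => ∀ j ∈ J, y j < X ω j) →
    CondSubvecStochLE w X I (fun ω => ∀ j ∈ J, y j < X ω j)
      (fun ω => ∀ j ∈ J, x j < X ω j)

/-- Negative association on a finite weighted sample space:
`Cov(ψ₁(X_{A₁}), ψ₂(X_{A₂})) ≤ 0` for disjoint `A₁, A₂` and bounded
coordinatewise increasing `ψ₁, ψ₂`. -/
def IsNAfin {Ω : Type*} [Fintype Ω] {n : ℕ} (w : Ω → ℝ) (X : Ω → Fin n → ℝ) : Prop :=
  ∀ A₁ A₂ : Finset (Fin n), Disjoint A₁ A₂ →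
    ∀ ψ₁ : ({i : Fin n // i ∈ A₁} → ℝ) → ℝ, ∀ ψ₂ : ({i : Fin n // i ∈ A₂} → ℝ) → ℝ,
      Monotone ψ₁ → Monotone ψ₂ → (∃ C, ∀ v, |ψ₁ v| ≤ C) → (∃ C, ∀ v, |ψ₂ v| ≤ C) →
      Expec w (fun ω => (ψ₁ fun i => X ω i.1) * (ψ₂ fun i => X ω i.1))
        ≤ Expec w (fun ω => ψ₁ fun i => X ω i.1) * Expec w (fun ω => ψ₂ fun i => X ω i.1)

/-- The uniform distribution on the permutations of `Fin n`. -/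
def unifPerm (n : ℕ) : Equiv.Perm (Fin n) → ℝ := fun _ => (Nat.factorial n : ℝ)⁻¹

/-- The random vector with the permutation distribution on `a`:
`X = (a_{σ(1)}, …, a_{σ(n)})` for a uniformly random permutation `σ`. -/
def permVec {n : ℕ} (a : Fin n → ℝ) (σ : Equiv.Perm (Fin n)) : Fin n → ℝ :=
  fun i => a (σ i)


/-!
Raising the entries of `c` to those of `b` one at a time, it suffices to compare `c` and `b` that
differ only in one value, `c k ≤ b k`. Let `A` and `B` be the sets of permutations meeting the
tail condition for `c` and for `b`. Then `A ⊆ B`, the statistic only grows on `A`, and `B \ A`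
consists of the permutations putting `k` at some `i ∈ I` with `c k < x i`. Relabelling by the
transposition `(k w)` turns the permutations of `B` with `σ i = k` and those of `A` with `σ i = w`
into the same comparison for `I \ {i}`, with `i` pinned to `k` and `w` as the raised value. So a
strong induction on `I`, for permutations pinned on a set of positions, shows that every part of
`B \ A` has average at least the average over `A`.
-/

open scoped BigOperators

section Averages

variable {ι κ : Type*}

/-- `𝔼_A g ≤ 𝔼_B h`, cross-multiplied, so that it holds trivially when `A` or `B` is empty. -/
def AvgLE (g : ι → ℝ) (A : Finset ι) (h : κ → ℝ) (B : Finset κ) : Prop :=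
  (∑ i ∈ A, g i) * #B ≤ (∑ j ∈ B, h j) * #A

namespace AvgLE

variable {g : ι → ℝ} {h : κ → ℝ} {A : Finset ι} {B : Finset κ}

lemma of_le {h : ι → ℝ} (hgh : ∀ i ∈ A, g i ≤ h i) : AvgLE g A h A :=
  mul_le_mul_of_nonneg_right (sum_le_sum hgh) (Nat.cast_nonneg _)

lemma union_right [DecidableEq κ] {B₁ B₂ : Finset κ} (hB : Disjoint B₁ B₂)
    (h₁ : AvgLE g A h B₁) (h₂ : AvgLE g A h B₂) : AvgLE g A h (B₁ ∪ B₂) := by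
  unfold AvgLE at *
  rw [card_union_of_disjoint hB, sum_union hB]
  push_cast
  linarith

lemma of_fiberwise_left {β : Type*} [Fintype β] [DecidableEq β] (t : ι → β)
    (H : ∀ w, {i ∈ A | t i = w}.Nonempty → AvgLE g {i ∈ A | t i = w} h B) :
    AvgLE g A h B := by
  unfold AvgLE at *
  rw [← sum_fiberwise A t g,
    card_eq_sum_card_fiberwise (s := A) (t := univ) fun i _ => mem_univ (t i)]
  push_cast
  rw [sum_mul, mul_sum]
  refine sum_le_sum fun w _ => ?_
  rcases {i ∈ A | t i = w}.eq_empty_or_nonempty with he | hne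
  · simp [he]
  · exact H w hne

lemma of_fiberwise_right {β : Type*} [Fintype β] [DecidableEq β] (t : κ → β)
    (H : ∀ w, {j ∈ B | t j = w}.Nonempty → AvgLE g A h {j ∈ B | t j = w}) :
    AvgLE g A h B := by
  unfold AvgLE at *
  rw [← sum_fiberwise B t h,
    card_eq_sum_card_fiberwise (s := B) (t := univ) fun j _ => mem_univ (t j)]
  push_cast
  rw [mul_sum, sum_mul _ _ (#A : ℝ)]
  refine sum_le_sum fun w _ => ?_
  rcases {j ∈ B | t j = w}.eq_empty_or_nonempty with he | hne
  · simp [he]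
  · exact H w hne

lemma map_left_iff {ι' : Type*} {g : ι' → ℝ} (e : ι ↪ ι') :
    AvgLE g (A.map e) h B ↔ AvgLE (g ∘ e) A h B := by
  simp [AvgLE]

lemma expect_le (hA : A.Nonempty) (hB : B.Nonempty) (H : AvgLE g A h B) :
    𝔼 i ∈ A, g i ≤ 𝔼 j ∈ B, h j := by
  rw [expect_eq_sum_div_card, expect_eq_sum_div_card,
    div_le_div_iff₀ (by simpa using hA.card_pos) (by simpa using hB.card_pos)]
  exact H

end AvgLE

end Averages

section TailPerms

variable {α : Type*} {F I : Finset α} {f : α → α} {σ : Equiv.Perm α}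

lemma pinned_ne_apply (hσ : ∀ p ∈ F, σ p = f p) {j : α} (hj : j ∉ F) : ∀ p ∈ F, f p ≠ σ j :=
  fun p hp hpj => hj (σ.injective ((hσ p hp).trans hpj) ▸ hp)

lemma forall_mem_insert_update_ne_iff [DecidableEq α] {i k u : α} (hiF : i ∉ F) :
    (∀ p ∈ insert i F, Function.update f i k p ≠ u) ↔ k ≠ u ∧ ∀ p ∈ F, f p ≠ u := by
  rw [forall_mem_insert, Function.update_self]
  refine and_congr_right fun _ => forall₂_congr fun p hp => ?_
  rw [Function.update_of_ne (ne_of_mem_of_not_mem hp hiF)]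

lemma update_eq_swap_update [DecidableEq α] {i k w : α} (hiF : i ∉ F) (hk : ∀ p ∈ F, f p ≠ k)
    (hw : ∀ p ∈ F, f p ≠ w) :
    ∀ p ∈ insert i F, Function.update f i k p = Equiv.swap k w (Function.update f i w p) := by
  simp only [forall_mem_insert, Function.update_self, Equiv.swap_apply_right, true_and]
  intro p hp
  rw [Function.update_of_ne (ne_of_mem_of_not_mem hp hiF),
    Function.update_of_ne (ne_of_mem_of_not_mem hp hiF),
    Equiv.swap_apply_of_ne_of_ne (hk p hp) (hw p hp)]

variable [Fintype α]

/-- Pinning `σ` to `f` on the positions `F` is how the induction below conditions on the value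
at a position. -/
def tailPerms (v : α → ℝ) (F : Finset α) (f : α → α) (I : Finset α) (x : α → ℝ) :
    Finset (Equiv.Perm α) :=
  {σ | (∀ p ∈ F, σ p = f p) ∧ ∀ i ∈ I, x i ≤ v (σ i)}

variable {v b c x : α → ℝ}

@[simp]
lemma mem_tailPerms :
    σ ∈ tailPerms v F f I x ↔ (∀ p ∈ F, σ p = f p) ∧ ∀ i ∈ I, x i ≤ v (σ i) := by
  simp [tailPerms]

lemma tailPerms_subset (hFI : Disjoint F I) (hcb : ∀ w, (∀ p ∈ F, f p ≠ w) → c w ≤ b w) :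
    tailPerms c F f I x ⊆ tailPerms b F f I x := by
  intro σ hσ
  rw [mem_tailPerms] at hσ ⊢
  exact ⟨hσ.1, fun i hi =>
    (hσ.2 i hi).trans (hcb _ (pinned_ne_apply hσ.1 (disjoint_right.mp hFI hi)))⟩

lemma filter_tailPerms_apply_eq {i w : α} (hi : i ∈ I) (hiF : i ∉ F) (hw : x i ≤ v w) :
    {σ ∈ tailPerms v F f I x | σ i = w} =
      tailPerms v (insert i F) (Function.update f i w) (I.erase i) x := by
  ext σ
  simp only [mem_filter, mem_tailPerms, forall_mem_insert, Function.update_self, mem_erase]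
  constructor
  · rintro ⟨⟨hF, hI⟩, hσi⟩
    refine ⟨⟨hσi, fun p hp => ?_⟩, fun j hj => hI j hj.2⟩
    rw [Function.update_of_ne (ne_of_mem_of_not_mem hp hiF)]
    exact hF p hp
  · rintro ⟨⟨hσi, hF⟩, hI⟩
    refine ⟨⟨fun p hp => ?_, fun j hj => ?_⟩, hσi⟩
    · simpa [Function.update_of_ne (ne_of_mem_of_not_mem hp hiF)] using hF p hp
    · by_cases hji : j = i
      · subst hji
        rwa [hσi]
      · exact hI j ⟨hji, hj⟩

lemma tailPerms_map_mulLeft (τ : Equiv.Perm α) {f' : α → α} (hf : ∀ p ∈ F, f' p = τ (f p)) :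
    (tailPerms v F f I x).map (mulLeftEmbedding τ) = tailPerms (v ∘ τ.symm) F f' I x := by
  ext σ
  simp only [mem_map, mulLeftEmbedding_apply, mem_tailPerms]
  constructor
  · rintro ⟨ρ, ⟨hF, hI⟩, rfl⟩
    exact ⟨fun p hp => by simp [hF p hp, hf p hp], fun i hi => by simpa using hI i hi⟩
  · rintro ⟨hF, hI⟩
    refine ⟨τ⁻¹ * σ, ⟨fun p hp => ?_, fun i hi => by simpa using hI i hi⟩, by group⟩
    simp [hF p hp, hf p hp]

lemma mem_of_mem_tailPerms_sdiff {k : α} (hFI : Disjoint F I)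
    (hcb : ∀ w, (∀ p ∈ F, f p ≠ w) → w ≠ k → c w = b w)
    (hσ : σ ∈ tailPerms b F f I x \ tailPerms c F f I x) :
    σ.symm k ∈ I ∧ c k < x (σ.symm k) ∧ x (σ.symm k) ≤ b k := by
  simp only [mem_sdiff, mem_tailPerms, not_and, not_forall, not_le] at hσ
  obtain ⟨⟨hF, hb⟩, hc⟩ := hσ
  obtain ⟨j, hj, hlt⟩ := hc hF
  have hσj : σ j = k := by
    by_contra hne
    rw [hcb _ (pinned_ne_apply hF (disjoint_right.mp hFI hj)) hne] at hlt
    exact (hb j hj).not_gt hlt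
  rw [← hσj, Equiv.symm_apply_apply]
  exact ⟨hj, hlt, hb j hj⟩

lemma filter_tailPerms_sdiff_eq {i k : α} (hi : i ∈ I) (hki : c k < x i) :
    {σ ∈ tailPerms b F f I x \ tailPerms c F f I x | σ.symm k = i} =
      {σ ∈ tailPerms b F f I x | σ i = k} := by
  ext σ
  rw [mem_filter, mem_filter, mem_sdiff, Equiv.symm_apply_eq, eq_comm]
  refine ⟨fun h => ⟨h.1.1, h.2⟩, fun h => ⟨⟨h.1, fun hc => ?_⟩, h.2⟩⟩
  have hxi := (mem_tailPerms.mp hc).2 i hi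
  rw [h.2] at hxi
  exact hki.not_ge hxi

variable {L : Finset α} {φ : ({i // i ∈ L} → ℝ) → ℝ}

lemma avgLE_of_relabel {h : Equiv.Perm α → ℝ} {B : Finset (Equiv.Perm α)} {τ : Equiv.Perm α}
    {f' : α → α} (hf : ∀ p ∈ F, f' p = τ (f p))
    (H : AvgLE (fun σ => φ fun i => (c ∘ τ.symm) (σ i.1)) (tailPerms (c ∘ τ.symm) F f' I x) h B) :
    AvgLE (fun σ => φ fun i => c (σ i.1)) (tailPerms c F f I x) h B := by
  rw [← tailPerms_map_mulLeft τ hf, AvgLE.map_left_iff] at H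
  convert H using 2 with σ
  simp

theorem avgLE_tailPerms (hφ : Monotone φ) {k : α} (hIL : Disjoint I L) (hFI : Disjoint F I)
    (hFL : Disjoint F L) (hk : ∀ p ∈ F, f p ≠ k) (hck : c k ≤ b k)
    (hcb : ∀ w, (∀ p ∈ F, f p ≠ w) → w ≠ k → c w = b w) :
    AvgLE (fun σ => φ fun i => c (σ i.1)) (tailPerms c F f I x)
      (fun σ => φ fun i => b (σ i.1)) (tailPerms b F f I x) := by
  induction I using Finset.strongInduction generalizing c F f k with
  | H I ih =>
  have hle : ∀ w, (∀ p ∈ F, f p ≠ w) → c w ≤ b w := fun w hw => by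
    by_cases hwk : w = k
    · exact hwk ▸ hck
    · exact (hcb w hw hwk).le
  rw [← union_sdiff_of_subset (tailPerms_subset hFI hle)]
  refine AvgLE.union_right disjoint_sdiff (AvgLE.of_le fun σ hσ => ?_) ?_
  · exact hφ fun j => hle _ (pinned_ne_apply (mem_tailPerms.mp hσ).1 (disjoint_right.mp hFL j.2))
  -- `B \ A` splits by the position `i ∈ I` of the raised value `k`; compare each part with the
  -- part of `A` having `w` at position `i`.
  refine AvgLE.of_fiberwise_right (fun σ => σ.symm k) fun i ⟨σ₀, hσ₀⟩ => ?_
  rw [mem_filter] at hσ₀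
  obtain ⟨hi, hki, hxb⟩ := hσ₀.2 ▸ mem_of_mem_tailPerms_sdiff hFI hcb hσ₀.1
  have hiF : i ∉ F := disjoint_right.mp hFI hi
  rw [filter_tailPerms_sdiff_eq hi hki, filter_tailPerms_apply_eq hi hiF hxb]
  refine AvgLE.of_fiberwise_left (fun σ => σ i) fun w ⟨σ₁, hσ₁⟩ => ?_
  rw [mem_filter] at hσ₁
  have hxw : x i ≤ c w := hσ₁.2 ▸ (mem_tailPerms.mp hσ₁.1).2 i hi
  have hwF : ∀ p ∈ F, f p ≠ w := hσ₁.2 ▸ pinned_ne_apply (mem_tailPerms.mp hσ₁.1).1 hiF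
  have hwk : w ≠ k := by
    rintro rfl
    exact hki.not_ge hxw
  rw [filter_tailPerms_apply_eq hi hiF hxw]
  -- After relabelling by the transposition `(k w)` both sides pin `i` to `k`, and the values
  -- now differ only at `w`, where `c k < x i ≤ c w = b w`.
  refine avgLE_of_relabel (update_eq_swap_update hiF hk hwF) ?_
  refine ih _ (erase_ssubset hi) (disjoint_of_subset_left (erase_subset i I) hIL)
    (disjoint_insert_left.mpr ⟨notMem_erase i I, disjoint_of_subset_right (erase_subset i I) hFI⟩)
    (disjoint_insert_left.mpr ⟨disjoint_left.mp hIL hi, hFL⟩)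
    ((forall_mem_insert_update_ne_iff hiF).mpr ⟨hwk.symm, hwF⟩)
    (by simpa using hki.le.trans (hxw.trans (hle w hwF))) fun u hu huw => ?_
  obtain ⟨hku, huF⟩ := (forall_mem_insert_update_ne_iff hiF).mp hu
  simpa [Equiv.swap_apply_of_ne_of_ne hku.symm huw] using hcb u huF hku.symm

theorem expect_tailPerms_le_of_le (hφ : Monotone φ) (hIL : Disjoint I L) (hcb : c ≤ b)
    (hA : (tailPerms c ∅ f I x).Nonempty) :
    𝔼 σ ∈ tailPerms c ∅ f I x, φ (fun i => c (σ i.1)) ≤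
      𝔼 σ ∈ tailPerms b ∅ f I x, φ fun i => b (σ i.1) := by
  suffices H : ∀ s : Finset α, (tailPerms (s.piecewise b c) ∅ f I x).Nonempty ∧
      𝔼 σ ∈ tailPerms c ∅ f I x, φ (fun i => c (σ i.1)) ≤
        𝔼 σ ∈ tailPerms (s.piecewise b c) ∅ f I x, φ fun i => s.piecewise b c (σ i.1) by
    simpa using (H univ).2
  intro s
  induction s using Finset.induction_on with
  | empty => simpa using hA
  | insert k s hk ih =>
    obtain ⟨hne, hle⟩ := ih
    have hmono (w : α) : s.piecewise b c w ≤ (insert k s).piecewise b c w := by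
      by_cases hwk : w = k
      · simp [hwk, hk, hcb k]
      · exact (piecewise_insert_of_ne _ _ _ hwk).ge
    have hsub : tailPerms (s.piecewise b c) ∅ f I x ⊆
        tailPerms ((insert k s).piecewise b c) ∅ f I x :=
      tailPerms_subset (disjoint_empty_left I) fun w _ => hmono w
    refine ⟨hne.mono hsub, hle.trans (AvgLE.expect_le hne (hne.mono hsub) ?_)⟩
    exact avgLE_tailPerms hφ hIL (disjoint_empty_left I) (disjoint_empty_left L) (by simp) (hmono k)
      fun w _ hwk => (piecewise_insert_of_ne _ _ _ hwk).symm

end TailPerms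

lemma cExp_const_eq_expect {Ω : Type*} [Fintype Ω] {a : ℝ} (ha : a ≠ 0) {A : Ω → Prop}
    {S : Finset Ω} (hS : ∀ ω, ω ∈ S ↔ A ω) (g : Ω → ℝ) :
    CExp (fun _ => a) A g = 𝔼 ω ∈ S, g ω := by
  obtain rfl : univ.filter A = S := by
    ext ω
    simp [hS]
  rw [CExp, Pr, expect_eq_sum_div_card, ← sum_filter, ← sum_filter, ← mul_sum, sum_const,
    nsmul_eq_mul, mul_comm _ a, mul_div_mul_left _ _ ha]

lemma exists_of_pr_pos {Ω : Type*} [Fintype Ω] {w : Ω → ℝ} {A : Ω → Prop} (h : 0 < Pr w A) :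
    ∃ ω, A ω := by
  by_contra hA
  simp [Pr, not_exists.mp hA] at h

theorem permutation_right_tail_comparison_general (n : ℕ) (b c : Fin n → ℝ)
    (hbc : ∀ i, c i ≤ b i) (I L : Finset (Fin n)) (hIL : Disjoint I L)
    (x : Fin n → ℝ)
    (hposZ : 0 < Pr (unifPerm n) fun σ => ∀ i ∈ I, x i ≤ permVec c σ i) :
    ∀ φ : ({i : Fin n // i ∈ L} → ℝ) → ℝ, Monotone φ → (∃ C, ∀ v, |φ v| ≤ C) →
      CExp (unifPerm n) (fun σ => ∀ i ∈ I, x i ≤ permVec c σ i)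
          (fun σ => φ fun i => permVec c σ i.1)
        ≤ CExp (unifPerm n) (fun σ => ∀ i ∈ I, x i ≤ permVec b σ i)
          (fun σ => φ fun i => permVec b σ i.1) := by
  intro φ hφ _
  have hevent (v : Fin n → ℝ) (σ : Equiv.Perm (Fin n)) :
      σ ∈ tailPerms v ∅ id I x ↔ ∀ i ∈ I, x i ≤ permVec v σ i := by
    simp [permVec]
  have hfac : (Nat.factorial n : ℝ)⁻¹ ≠ 0 := by positivity
  obtain ⟨σ, hσ⟩ := exists_of_pr_pos hposZ
  unfold unifPerm
  rw [cExp_const_eq_expect hfac (hevent c), cExp_const_eq_expect hfac (hevent b)]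
  exact expect_tailPerms_le_of_le hφ hIL hbc ⟨σ, (hevent c σ).mpr hσ⟩

/-- If `Y`, `Z` have the permutation distributions on `b ≥ c`
(componentwise), then `[Z_L | Z_I ≥ x_I] ≤_st [Y_L | Y_I ≥ x_I]` for disjoint proper
subsets `I, L` whenever both conditioning events have positive probability. -/
theorem permutation_right_tail_comparison (n : ℕ) (b c : Fin n → ℝ)
    (hbc : ∀ i, c i ≤ b i) (I L : Finset (Fin n)) (hIL : Disjoint I L)
    (hI : I ≠ Finset.univ) (hL : L ≠ Finset.univ) (x : Fin n → ℝ)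
    (hposY : 0 < Pr (unifPerm n) fun σ => ∀ i ∈ I, x i ≤ permVec b σ i)
    (hposZ : 0 < Pr (unifPerm n) fun σ => ∀ i ∈ I, x i ≤ permVec c σ i) :
    ∀ φ : ({i : Fin n // i ∈ L} → ℝ) → ℝ, Monotone φ → (∃ C, ∀ v, |φ v| ≤ C) →
      CExp (unifPerm n) (fun σ => ∀ i ∈ I, x i ≤ permVec c σ i)
          (fun σ => φ fun i => permVec c σ i.1)
        ≤ CExp (unifPerm n) (fun σ => ∀ i ∈ I, x i ≤ permVec b σ i)
          (fun σ => φ fun i => permVec b σ i.1) :=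
  permutation_right_tail_comparison_general n b c hbc I L hIL x hposZ
end
end

section
/- Let b = (b_1, …, b_n) and c = (c_1, …, c_n) be real vectors with b_i ≥ c_i for all i, and let Y and Z be random vectors having the permutation distributions on b and on c, respectively. Then for any two disjoint proper subsets I, L of {1,…,n} and any x_I ∈ ℝ^{|I|} such that both conditioning events have positive probability, [Z_L | Z_I ≤ x_I] ≤_st [Y_L | Y_I ≤ x_I]. -/
open scoped Classical
open Finset

noncomputable section

/-!
Sort `b` and `c`. For a sorted vector `a`, the event `{a (σ i) ≤ x i, i ∈ I}` asks each rank
`σ i` to lie in a lower set of `Fin n`, and the constraint sets for `b` are contained in those for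
`c`, since the sorted `c` is dominated by the sorted `b`. Replacing the values of `c` by those of
`b` only increases the statistic, so it remains to show that tightening lower-set constraints on
positions outside `L` raises the conditional mean of an increasing function of `σ_L`. Tighten one
position `p` at a time and induct on `n`: given `σ p = v`, the other ranks form a uniform
permutation of `n` elements whose constraints loosen as `v` grows while the values at `L` move
down, so the conditional mean decreases in `v`, and cutting off the large values of `σ p` raises
the mean.
-/

section Average

variable {α β : Type*}

/-- `f` averages over `A` to at most its average over `B`; cross-multiplied, hence trivially
true when `A` or `B` is empty. -/
def AverageLE (f : α → ℝ) (A B : Finset α) : Prop :=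
  (∑ a ∈ A, f a) * #B ≤ (∑ b ∈ B, f b) * #A

lemma AverageLE.refl (f : α → ℝ) (A : Finset α) : AverageLE f A A := le_rfl

lemma AverageLE.trans {f : α → ℝ} {A B C : Finset α} (hAB : AverageLE f A B)
    (hBC : AverageLE f B C) (hCB : C ⊆ B) : AverageLE f A C := by
  unfold AverageLE at *
  rcases B.eq_empty_or_nonempty with rfl | hB
  · simp [subset_empty.mp hCB]
  have hB : (0 : ℝ) < #B := by exact_mod_cast hB.card_pos
  refine le_of_mul_le_mul_right ?_ hB
  nlinarith [mul_le_mul_of_nonneg_right hAB (Nat.cast_nonneg (α := ℝ) #C),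
    mul_le_mul_of_nonneg_right hBC (Nat.cast_nonneg (α := ℝ) #A)]

lemma AverageLE.div_le_div {f : α → ℝ} {A B : Finset α} (h : AverageLE f A B)
    (hA : A.Nonempty) (hB : B.Nonempty) :
    (∑ a ∈ A, f a) / #A ≤ (∑ b ∈ B, f b) / #B := by
  rwa [div_le_div_iff₀ (by exact_mod_cast hA.card_pos) (by exact_mod_cast hB.card_pos)]

lemma averageLE_biUnion [DecidableEq α] {f : α → ℝ} {S : β → Finset α} {V W : Finset β}
    (hS : (W : Set β).PairwiseDisjoint S) (hVW : V ⊆ W)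
    (h : ∀ v ∈ V, ∀ w ∈ W \ V, AverageLE f (S w) (S v)) :
    AverageLE f (W.biUnion S) (V.biUnion S) := by
  have hV : (V : Set β).PairwiseDisjoint S := hS.subset (coe_subset.mpr hVW)
  unfold AverageLE at *
  simp only [sum_biUnion hS, sum_biUnion hV, card_biUnion hS, card_biUnion hV, Nat.cast_sum]
  rw [← sum_sdiff hVW, ← sum_sdiff (f := fun w => ((#(S w) : ℕ) : ℝ)) hVW]
  have hcross : (∑ w ∈ W \ V, ∑ a ∈ S w, f a) * ∑ v ∈ V, ((#(S v) : ℕ) : ℝ)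
      ≤ (∑ v ∈ V, ∑ a ∈ S v, f a) * ∑ w ∈ W \ V, ((#(S w) : ℕ) : ℝ) := by
    rw [sum_mul_sum, sum_mul_sum, sum_comm]
    exact sum_le_sum fun v hv => sum_le_sum fun w hw => h v hv w hw
  linarith

end Average

lemma Fin.antitone_succAbove {n : ℕ} (m : Fin n) :
    Antitone fun p : Fin (n + 1) => p.succAbove m := by
  intro v w hvw
  simp only [Fin.succAbove, Fin.le_def, Fin.lt_def] at *
  split_ifs <;> simp only [Fin.val_succ, Fin.val_castSucc] <;> omega

lemma Monotone.le_of_dependsOn {ι α β : Type*} [Preorder α] [Preorder β] {ψ : (ι → α) → β}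
    (hψ : Monotone ψ) {L : Set ι} (hψL : DependsOn ψ L) {x y : ι → α} (h : ∀ i ∈ L, x i ≤ y i) :
    ψ x ≤ ψ y := by
  calc ψ x = ψ (L.piecewise x y) := hψL fun i hi => by simp [hi]
    _ ≤ ψ y := hψ fun i => by by_cases hi : i ∈ L <;> simp [hi, h]

open Equiv

section Permutations

variable {n : ℕ}

def permsWithin (D : Fin n → Set (Fin n)) : Finset (Perm (Fin n)) :=
  univ.filter fun σ => ∀ i, σ i ∈ D i

lemma mem_permsWithin {D : Fin n → Set (Fin n)} {σ : Perm (Fin n)} :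
    σ ∈ permsWithin D ↔ ∀ i, σ i ∈ D i := by
  simp [permsWithin]

lemma permsWithin_mono {D E : Fin n → Set (Fin n)} (h : ∀ i, E i ⊆ D i) :
    permsWithin E ⊆ permsWithin D := fun _ hσ =>
  mem_permsWithin.mpr fun i => h i (mem_permsWithin.mp hσ i)

def insertPerm (p v : Fin (n + 1)) (τ : Perm (Fin n)) : Perm (Fin (n + 1)) :=
  ((finSuccEquiv' p).trans (optionCongr τ)).trans (finSuccEquiv' v).symm

lemma coe_insertPerm (p v : Fin (n + 1)) (τ : Perm (Fin n)) :
    ⇑(insertPerm p v τ) = Fin.insertNth p v fun j => v.succAbove (τ j) := by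
  funext i
  refine Fin.succAboveCases p ?_ (fun j => ?_) i
  · simp [insertPerm, finSuccEquiv'_at, finSuccEquiv'_symm_none]
  · simp [insertPerm, finSuccEquiv'_succAbove, finSuccEquiv'_symm_some]

@[simp] lemma insertPerm_apply_self (p v : Fin (n + 1)) (τ : Perm (Fin n)) :
    insertPerm p v τ p = v := by
  simp [coe_insertPerm]

@[simp] lemma insertPerm_apply_succAbove (p v : Fin (n + 1)) (τ : Perm (Fin n)) (j : Fin n) :
    insertPerm p v τ (p.succAbove j) = v.succAbove (τ j) := by
  simp [coe_insertPerm]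

lemma insertPerm_injective (p v : Fin (n + 1)) : Function.Injective (insertPerm p v) := by
  intro τ τ' h
  exact Equiv.ext fun j => by simpa using congr($h (p.succAbove j))

lemma exists_insertPerm_eq {p v : Fin (n + 1)} {σ : Perm (Fin (n + 1))} (h : σ p = v) :
    ∃ τ, insertPerm p v τ = σ := by
  have hne (j : Fin n) : σ (p.succAbove j) ≠ v :=
    h ▸ σ.injective.ne (Fin.succAbove_ne p j)
  choose f hf using fun j => Fin.exists_succAbove_eq (hne j)
  have hinj : Function.Injective f := fun j k hjk =>
    Fin.succAbove_right_injective (σ.injective (by rw [← hf j, ← hf k, hjk]))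
  refine ⟨Equiv.ofBijective f (Finite.injective_iff_bijective.mp hinj), ?_⟩
  ext1 i
  refine Fin.succAboveCases p ?_ (fun j => ?_) i
  · simp [h]
  · simp [hf]

def sliceBox (p v : Fin (n + 1)) (D : Fin (n + 1) → Set (Fin (n + 1))) : Fin n → Set (Fin n) :=
  fun j => v.succAbove ⁻¹' D (p.succAbove j)

lemma insertPerm_mem_permsWithin {p v : Fin (n + 1)} {D : Fin (n + 1) → Set (Fin (n + 1))}
    {τ : Perm (Fin n)} :
    insertPerm p v τ ∈ permsWithin D ↔ v ∈ D p ∧ τ ∈ permsWithin (sliceBox p v D) := by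
  simp [mem_permsWithin, Fin.forall_iff_succAbove p, sliceBox]

lemma sum_filter_permsWithin_apply_eq {M : Type*} [AddCommMonoid M] {p v : Fin (n + 1)}
    {D : Fin (n + 1) → Set (Fin (n + 1))} (hv : v ∈ D p) (F : Perm (Fin (n + 1)) → M) :
    ∑ σ ∈ (permsWithin D).filter (· p = v), F σ
      = ∑ τ ∈ permsWithin (sliceBox p v D), F (insertPerm p v τ) := by
  symm
  refine sum_nbij (insertPerm p v) (fun τ hτ => ?_) (insertPerm_injective p v).injOn
    (fun σ hσ => ?_) fun _ _ => rfl
  · simp [insertPerm_mem_permsWithin.mpr ⟨hv, hτ⟩]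
  · obtain ⟨hσD, hσp⟩ := mem_filter.mp hσ
    obtain ⟨τ, rfl⟩ := exists_insertPerm_eq hσp
    exact ⟨τ, (insertPerm_mem_permsWithin.mp hσD).2, rfl⟩

lemma card_filter_permsWithin_apply_eq {p v : Fin (n + 1)}
    {D : Fin (n + 1) → Set (Fin (n + 1))} (hv : v ∈ D p) :
    #((permsWithin D).filter (· p = v)) = #(permsWithin (sliceBox p v D)) := by
  rw [card_eq_sum_ones, card_eq_sum_ones]
  exact sum_filter_permsWithin_apply_eq hv fun _ => 1

end Permutations

section PermNLTD

variable {n : ℕ}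

lemma isLowerSet_sliceBox {D : Fin (n + 1) → Set (Fin (n + 1))} (hD : ∀ i, IsLowerSet (D i))
    (p v : Fin (n + 1)) (j : Fin n) : IsLowerSet (sliceBox p v D j) :=
  (hD _).preimage (Fin.strictMono_succAbove v).monotone

lemma sliceBox_subset_sliceBox {D : Fin (n + 1) → Set (Fin (n + 1))}
    (hD : ∀ i, IsLowerSet (D i)) (p : Fin (n + 1)) {v w : Fin (n + 1)} (hvw : v ≤ w) (j : Fin n) :
    sliceBox p v D j ⊆ sliceBox p w D j := fun _ hm =>
  hD _ (Fin.antitone_succAbove _ hvw) hm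

/-- Negative left-tail dependence (cf. `IsNLTD`) of a uniform random permutation, stated for its
ranks and lower-set constraints. -/
def PermNLTD (n : ℕ) : Prop :=
  ∀ (L : Set (Fin n)) (ψ : (Fin n → Fin n) → ℝ), Monotone ψ → DependsOn ψ L →
    ∀ D E : Fin n → Set (Fin n), (∀ i, IsLowerSet (D i)) → (∀ i, IsLowerSet (E i)) →
      (∀ i, E i ⊆ D i) → (∀ i ∈ L, E i = Set.univ) →
      AverageLE (fun σ : Perm (Fin n) => ψ σ) (permsWithin D) (permsWithin E)

variable {L : Set (Fin (n + 1))} {ψ : (Fin (n + 1) → Fin (n + 1)) → ℝ}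
  {D : Fin (n + 1) → Set (Fin (n + 1))} {p : Fin (n + 1)}

/-- A larger value at `p` pushes the values at the other positions down (`succAbove` is antitone in
the pivot) and loosens their constraints. -/
lemma PermNLTD.averageLE_fiber (IH : PermNLTD n) (hψ : Monotone ψ) (hψL : DependsOn ψ L)
    (hD : ∀ i, IsLowerSet (D i)) (hDL : ∀ i ∈ L, D i = Set.univ) (hpL : p ∉ L)
    (hDp : D p = Set.univ) {v w : Fin (n + 1)} (hvw : v ≤ w) :
    AverageLE (fun σ : Perm (Fin (n + 1)) => ψ σ) ((permsWithin D).filter (· p = w))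
      ((permsWithin D).filter (· p = v)) := by
  set extend : Fin (n + 1) → (Fin n → Fin n) → Fin (n + 1) → Fin (n + 1) :=
    fun u f => Fin.insertNth p u fun j => u.succAbove (f j)
  have hsucc {i : Fin (n + 1)} (hi : i ∈ L) :
      ∃ j, p.succAbove j = i := Fin.exists_succAbove_eq fun h => hpL (h ▸ hi)
  have hext (f : Fin n → Fin n) : ψ (extend w f) ≤ ψ (extend v f) := by
    refine hψ.le_of_dependsOn hψL fun i hi => ?_
    obtain ⟨j, rfl⟩ := hsucc hi
    simpa [extend] using Fin.antitone_succAbove (f j) hvw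
  have hmono : Monotone fun f => ψ (extend v f) := fun f g hfg =>
    hψ (Fin.insertNth_le_iff.mpr ⟨by simp [extend],
      fun j => by simpa [extend] using (Fin.strictMono_succAbove v).monotone (hfg j)⟩)
  have hdep : DependsOn (fun f => ψ (extend v f)) (p.succAbove ⁻¹' L) := fun f g hfg =>
    hψL fun i hi => by
      obtain ⟨j, rfl⟩ := hsucc hi
      simp [extend, hfg j hi]
  have hIH := IH _ _ hmono hdep (sliceBox p w D) (sliceBox p v D) (isLowerSet_sliceBox hD p w)
    (isLowerSet_sliceBox hD p v) (sliceBox_subset_sliceBox hD p hvw)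
    (fun j hj => by simp [sliceBox, hDL _ hj])
  have hmem (u : Fin (n + 1)) : u ∈ D p := hDp ▸ Set.mem_univ u
  unfold AverageLE at hIH ⊢
  simp only [sum_filter_permsWithin_apply_eq (hmem _), card_filter_permsWithin_apply_eq (hmem _),
    coe_insertPerm]
  set Av := permsWithin (sliceBox p v D)
  set Aw := permsWithin (sliceBox p w D)
  calc (∑ τ ∈ Aw, ψ (extend w τ)) * #Av ≤ (∑ τ ∈ Aw, ψ (extend v τ)) * #Av :=
        mul_le_mul_of_nonneg_right (sum_le_sum fun τ _ => hext τ) (Nat.cast_nonneg _)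
    _ ≤ _ := hIH

lemma permsWithin_update_eq_biUnion (D : Fin n → Set (Fin n)) (p : Fin n) (P : Set (Fin n)) :
    permsWithin (Function.update D p P)
      = (univ.filter (· ∈ P)).biUnion
          fun v => (permsWithin (Function.update D p Set.univ)).filter (· p = v) := by
  ext σ
  have h (X : Set (Fin n)) := Function.forall_update_iff D (a := p) (b := X) fun i s => σ i ∈ s
  simp only [mem_permsWithin, mem_biUnion, mem_filter, mem_univ, true_and, h]
  simp

lemma PermNLTD.averageLE_update (IH : PermNLTD n) (hψ : Monotone ψ) (hψL : DependsOn ψ L)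
    (hD : ∀ i, IsLowerSet (D i)) (hDL : ∀ i ∈ L, D i = Set.univ) (hpL : p ∉ L)
    {P : Set (Fin (n + 1))} (hP : IsLowerSet P) (hPD : P ⊆ D p) :
    AverageLE (fun σ : Perm (Fin (n + 1)) => ψ σ) (permsWithin D)
      (permsWithin (Function.update D p P)) := by
  have hDD := permsWithin_update_eq_biUnion D p (D p)
  rw [Function.update_eq_self] at hDD
  rw [hDD, permsWithin_update_eq_biUnion D p P]
  refine averageLE_biUnion (Set.pairwiseDisjoint_filter _ _ _)
    (monotone_filter_right _ fun v _ => @hPD v) fun v hv w hw => ?_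
  simp only [mem_sdiff, mem_filter, mem_univ, true_and] at hv hw
  refine IH.averageLE_fiber hψ hψL ?_ ?_ hpL (by simp) (not_le.mp fun hwv => hw.2 (hP hwv hv)).le
  · exact (Function.forall_update_iff D fun _ s => IsLowerSet s).mpr
      ⟨isLowerSet_univ, fun i _ => hD i⟩
  · intro i hi
    rw [Function.update_of_ne (ne_of_mem_of_not_mem hi hpL), hDL i hi]

lemma PermNLTD.succ (IH : PermNLTD n) : PermNLTD (n + 1) := by
  intro L ψ hψ hψL D E hD hE hED hEL
  have hDL (i : Fin (n + 1)) (hi : i ∈ L) : D i = Set.univ :=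
    Set.eq_univ_of_univ_subset (hEL i hi ▸ hED i)
  suffices h : ∀ S : Finset (Fin (n + 1)), (∀ i ∈ S, i ∉ L) →
      AverageLE (fun σ : Perm (Fin (n + 1)) => ψ σ) (permsWithin D)
        (permsWithin (S.piecewise E D)) by
    have hE' : (univ.filter (· ∉ L)).piecewise E D = E := funext fun i => by
      by_cases hi : i ∈ L <;> simp [hi, hDL, hEL]
    simpa [hE'] using h (univ.filter (· ∉ L)) (by simp)
  intro S hS
  induction S using Finset.induction_on with
  | empty => simpa using AverageLE.refl _ _
  | insert p S _ ih =>
    have hSE (i : Fin (n + 1)) : E i ⊆ S.piecewise E D i := by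
      by_cases hi : i ∈ S <;> simp [hi, hED i]
    rw [piecewise_insert]
    refine (ih fun i hi => hS i (mem_insert_of_mem hi)).trans
      (IH.averageLE_update hψ hψL (fun i => ?_) (fun i hi => ?_) (hS p (mem_insert_self p S))
        (hE p) (hSE p)) (permsWithin_mono fun i => ?_)
    · by_cases hi : i ∈ S <;> simp [hi, hD i, hE i]
    · exact Set.eq_univ_of_univ_subset (hEL i hi ▸ hSE i)
    · rcases eq_or_ne i p with rfl | hip
      · simpa using hSE i
      · simp [hip]

end PermNLTD

theorem permNLTD : ∀ n, PermNLTD n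
  | 0 => fun _ _ _ _ D E _ _ _ _ => by
    rw [show permsWithin D = permsWithin E by ext σ; simp [mem_permsWithin]]
    exact AverageLE.refl _ _
  | n + 1 => (permNLTD n).succ

section PermutationDistribution

variable {n : ℕ}

lemma sum_permVec_comp {M : Type*} [AddCommMonoid M] (a : Fin n → ℝ) (π : Perm (Fin n))
    (G : (Fin n → ℝ) → M) :
    ∑ σ, G (permVec a σ) = ∑ σ, G (permVec (a ∘ π) σ) :=
  Fintype.sum_equiv (Equiv.mulLeft π⁻¹) _ _ fun σ =>
    congrArg G (funext fun i => by simp [permVec])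

lemma Pr_unifPerm_permVec_comp (a : Fin n → ℝ) (π : Perm (Fin n)) (A : (Fin n → ℝ) → Prop) :
    Pr (unifPerm n) (fun σ => A (permVec a σ))
      = Pr (unifPerm n) (fun σ => A (permVec (a ∘ π) σ)) :=
  sum_permVec_comp a π fun y => if A y then (n.factorial : ℝ)⁻¹ else 0

lemma CExp_unifPerm_permVec_comp (a : Fin n → ℝ) (π : Perm (Fin n)) (A : (Fin n → ℝ) → Prop)
    (F : (Fin n → ℝ) → ℝ) :
    CExp (unifPerm n) (fun σ => A (permVec a σ)) (fun σ => F (permVec a σ))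
      = CExp (unifPerm n) (fun σ => A (permVec (a ∘ π) σ)) (fun σ => F (permVec (a ∘ π) σ)) := by
  rw [CExp, CExp, Pr_unifPerm_permVec_comp a π]
  congr 1
  exact sum_permVec_comp a π fun y => if A y then (n.factorial : ℝ)⁻¹ * F y else 0

lemma CExp_unifPerm {A : Perm (Fin n) → Prop} {S : Finset (Perm (Fin n))}
    (hS : ∀ σ, σ ∈ S ↔ A σ) (f : Perm (Fin n) → ℝ) :
    CExp (unifPerm n) A f = (∑ σ ∈ S, f σ) / #S := by
  obtain rfl : S = univ.filter A := by ext σ; simp [hS]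
  have hn : (n.factorial : ℝ) ≠ 0 := by positivity
  simp only [CExp, Pr, unifPerm, ← sum_filter, ← mul_sum, sum_const, nsmul_eq_mul]
  rw [mul_comm ((#_ : ℕ) : ℝ), mul_div_mul_left _ _ (inv_ne_zero hn)]

lemma nonempty_of_Pr_pos {Ω : Type*} [Fintype Ω] {w : Ω → ℝ} {A : Ω → Prop} {S : Finset Ω}
    (hS : ∀ ω, ω ∈ S ↔ A ω) (h : 0 < Pr w A) : S.Nonempty := by
  contrapose! h
  simp [Pr, ← hS, h]

lemma sort_le_sort {b c : Fin n → ℝ} (hbc : ∀ i, c i ≤ b i) (u : Fin n) :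
    c (Tuple.sort c u) ≤ b (Tuple.sort b u) := by
  set v := b (Tuple.sort b u)
  have hcard (a : Fin n → ℝ) :
      #(univ.filter fun i => a (Tuple.sort a i) ≤ v) = #(univ.filter fun i => a i ≤ v) :=
    card_equiv (Tuple.sort a) fun i => by simp
  refine (Tuple.lt_card_le_iff_apply_le_of_monotone (Tuple.monotone_sort c)).mp ?_
  calc (u : ℕ) < #(univ.filter fun i => b (Tuple.sort b i) ≤ v) :=
        (Tuple.lt_card_le_iff_apply_le_of_monotone (Tuple.monotone_sort b)).mpr le_rfl
    _ ≤ #(univ.filter fun i => c (Tuple.sort c i) ≤ v) := by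
      rw [hcard, hcard]
      exact card_le_card fun i hi => by simpa using (hbc i).trans (mem_filter.mp hi).2

def leftTailBox (I : Finset (Fin n)) (x a : Fin n → ℝ) (i : Fin n) : Set (Fin n) :=
  {m | i ∈ I → a m ≤ x i}

lemma isLowerSet_leftTailBox {a : Fin n → ℝ} (ha : Monotone a) (I : Finset (Fin n))
    (x : Fin n → ℝ) (i : Fin n) : IsLowerSet (leftTailBox I x a i) :=
  fun _ _ hm hm' hi => (ha hm).trans (hm' hi)

lemma mem_permsWithin_leftTailBox {I : Finset (Fin n)} {x a : Fin n → ℝ} (σ : Perm (Fin n)) :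
    σ ∈ permsWithin (leftTailBox I x a) ↔ ∀ i ∈ I, permVec a σ i ≤ x i := by
  simp [mem_permsWithin, permVec, leftTailBox]

lemma CExp_leftTail_eq_average (I : Finset (Fin n)) (x a : Fin n → ℝ) (F : (Fin n → ℝ) → ℝ) :
    CExp (unifPerm n) (fun σ => ∀ i ∈ I, permVec a σ i ≤ x i) (fun σ => F (permVec a σ))
      = (∑ σ ∈ permsWithin (leftTailBox I x (a ∘ Tuple.sort a)),
            F (permVec (a ∘ Tuple.sort a) σ))
          / #(permsWithin (leftTailBox I x (a ∘ Tuple.sort a))) := by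
  rw [CExp_unifPerm_permVec_comp a (Tuple.sort a) (fun y => ∀ i ∈ I, y i ≤ x i),
    CExp_unifPerm mem_permsWithin_leftTailBox]

lemma nonempty_permsWithin_leftTailBox {I : Finset (Fin n)} {x a : Fin n → ℝ}
    (h : 0 < Pr (unifPerm n) fun σ => ∀ i ∈ I, permVec a σ i ≤ x i) :
    (permsWithin (leftTailBox I x (a ∘ Tuple.sort a))).Nonempty :=
  nonempty_of_Pr_pos mem_permsWithin_leftTailBox <| by
    rwa [Pr_unifPerm_permVec_comp a (Tuple.sort a) fun y => ∀ i ∈ I, y i ≤ x i] at h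

end PermutationDistribution

theorem permutation_left_tail_comparison_general (n : ℕ) (b c : Fin n → ℝ)
    (hbc : ∀ i, c i ≤ b i) (I L : Finset (Fin n)) (hIL : Disjoint I L)
    (x : Fin n → ℝ)
    (hposY : 0 < Pr (unifPerm n) fun σ => ∀ i ∈ I, permVec b σ i ≤ x i)
    (hposZ : 0 < Pr (unifPerm n) fun σ => ∀ i ∈ I, permVec c σ i ≤ x i) :
    ∀ φ : ({i : Fin n // i ∈ L} → ℝ) → ℝ, Monotone φ → (∃ C, ∀ v, |φ v| ≤ C) →
      CExp (unifPerm n) (fun σ => ∀ i ∈ I, permVec c σ i ≤ x i)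
          (fun σ => φ fun i => permVec c σ i.1)
        ≤ CExp (unifPerm n) (fun σ => ∀ i ∈ I, permVec b σ i ≤ x i)
          (fun σ => φ fun i => permVec b σ i.1) := by
  intro φ hφ _
  rw [CExp_leftTail_eq_average I x c fun y => φ fun i => y i.1,
    CExp_leftTail_eq_average I x b fun y => φ fun i => y i.1]
  have hNLTD := permNLTD n L (fun f => φ fun i => b (Tuple.sort b (f i)))
    (fun f g hfg => hφ fun i => Tuple.monotone_sort b (hfg i))
    (fun f g hfg => congrArg φ (funext fun i => by rw [hfg i i.2]))
    (leftTailBox I x (c ∘ Tuple.sort c)) (leftTailBox I x (b ∘ Tuple.sort b))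
    (isLowerSet_leftTailBox (Tuple.monotone_sort c) I x)
    (isLowerSet_leftTailBox (Tuple.monotone_sort b) I x)
    (fun i m hm hi => (sort_le_sort hbc m).trans (hm hi))
    (fun i hi => Set.eq_univ_of_forall fun m hiI => (disjoint_left.mp hIL hiI hi).elim)
  set Ac := permsWithin (leftTailBox I x (c ∘ Tuple.sort c))
  calc _ ≤ (∑ σ ∈ Ac, φ fun i => b (Tuple.sort b (σ i))) / #Ac :=
        div_le_div_of_nonneg_right (sum_le_sum fun σ _ => hφ fun i => sort_le_sort hbc _)
          (Nat.cast_nonneg _)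
    _ ≤ _ := hNLTD.div_le_div (nonempty_permsWithin_leftTailBox hposZ)
          (nonempty_permsWithin_leftTailBox hposY)

/-- If `Y`, `Z` have the permutation distributions on `b ≥ c`
(componentwise), then `[Z_L | Z_I ≤ x_I] ≤_st [Y_L | Y_I ≤ x_I]` for disjoint proper
subsets `I, L` whenever both conditioning events have positive probability. -/
theorem permutation_left_tail_comparison (n : ℕ) (b c : Fin n → ℝ)
    (hbc : ∀ i, c i ≤ b i) (I L : Finset (Fin n)) (hIL : Disjoint I L)
    (hI : I ≠ Finset.univ) (hL : L ≠ Finset.univ) (x : Fin n → ℝ)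
    (hposY : 0 < Pr (unifPerm n) fun σ => ∀ i ∈ I, permVec b σ i ≤ x i)
    (hposZ : 0 < Pr (unifPerm n) fun σ => ∀ i ∈ I, permVec c σ i ≤ x i) :
    ∀ φ : ({i : Fin n // i ∈ L} → ℝ) → ℝ, Monotone φ → (∃ C, ∀ v, |φ v| ≤ C) →
      CExp (unifPerm n) (fun σ => ∀ i ∈ I, permVec c σ i ≤ x i)
          (fun σ => φ fun i => permVec c σ i.1)
        ≤ CExp (unifPerm n) (fun σ => ∀ i ∈ I, permVec b σ i ≤ x i)
          (fun σ => φ fun i => permVec b σ i.1) :=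
  permutation_left_tail_comparison_general n b c hbc I L hIL x hposY hposZ
end
end
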